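/- Let C = {C_1,…,C_k} be a clustering of a finite set X ⊆ ℝ^m with centers μ_i and radii r(C_i), satisfying the γ-margin property, and let ε ≥ 0 with γ ≥ 1 + 2ε. Let μ' ∈ ℝ^m satisfy d(μ', μ_i) ≤ ε·r(C_i), and let S be any set with C_i ⊆ S ⊆ X. Then {x ∈ S : d(x, μ') ≤ (1+ε)·r(C_i)} = C_i. -/

import Mathlib

open Finset
open scoped Classical

/-- The center (mean) of a finite cluster of points in Euclidean space. -/
noncomputable def ctr {m : ℕ} (C : Finset (EuclideanSpace ℝ (Fin m))) : EuclideanSpace ℝ (Fin m) :=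
  (C.card : ℝ)⁻¹ • ∑ x ∈ C, x

/-- The radius of a cluster: the maximal distance of a member to the center. -/
noncomputable def rad {m : ℕ} (C : Finset (EuclideanSpace ℝ (Fin m))) : ℝ :=
  sSup ((fun x => dist x (ctr C)) '' (C : Set (EuclideanSpace ℝ (Fin m))))

/-- Confusion predicate for the (ν, ρ) local distance-weak oracle. -/
def LocalConfused {m k : ℕ} (Cl : Fin k → Finset (EuclideanSpace ℝ (Fin m))) (ν ρ : ℝ)
    (x y : EuclideanSpace ℝ (Fin m)) : Prop :=
  (∃ i j, i ≠ j ∧ x ∈ Cl i ∧ y ∈ Cl j ∧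
    dist x y < (ν - 1) * min (dist x (ctr (Cl i))) (dist y (ctr (Cl j)))) ∨
  (∃ i, x ∈ Cl i ∧ y ∈ Cl i ∧ 2 * ρ * rad (Cl i) < dist x y)

/-- Confusion predicate for the ρ global distance-weak oracle. -/
def GlobalConfused {m k : ℕ} (Cl : Fin k → Finset (EuclideanSpace ℝ (Fin m))) (ρ : ℝ)
    (x y : EuclideanSpace ℝ (Fin m)) : Prop :=
  (∃ i j, i ≠ j ∧ x ∈ Cl i ∧ y ∈ Cl j ∧
    (ρ * rad (Cl i) < dist x (ctr (Cl i)) ∨ ρ * rad (Cl j) < dist y (ctr (Cl j)))) ∨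
  (∃ i, x ∈ Cl i ∧ y ∈ Cl i ∧ 2 * ρ * rad (Cl i) < dist x y)

/-- Two points lie in the same cluster. -/
def SameCluster {m k : ℕ} (Cl : Fin k → Finset (EuclideanSpace ℝ (Fin m)))
    (x y : EuclideanSpace ℝ (Fin m)) : Prop :=
  ∃ i, x ∈ Cl i ∧ y ∈ Cl i

/-- The truthful (ν, ρ) local distance-weak oracle: answers 0 on confused pairs,
1 on same-cluster non-confused pairs, and -1 on different-cluster non-confused pairs. -/
noncomputable def localQ {m k : ℕ} (Cl : Fin k → Finset (EuclideanSpace ℝ (Fin m))) (ν ρ : ℝ)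
    (x y : EuclideanSpace ℝ (Fin m)) : ℤ :=
  if LocalConfused Cl ν ρ x y then 0 else if SameCluster Cl x y then 1 else -1

/-- The truthful ρ global distance-weak oracle. -/
noncomputable def globalQ {m k : ℕ} (Cl : Fin k → Finset (EuclideanSpace ℝ (Fin m))) (ρ : ℝ)
    (x y : EuclideanSpace ℝ (Fin m)) : ℤ :=
  if GlobalConfused Cl ρ x y then 0 else if SameCluster Cl x y then 1 else -1

/-- The margin bound `γ * r < d(y, c)` outside `C` leaves room for the error `ε * r` in the
estimated center twice: once to keep `C` inside the recovered ball, once to keep `S \ C` out. -/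
theorem filter_dist_le_eq_of_margin {α : Type*} [PseudoMetricSpace α] {C S : Finset α}
    {c μ : α} {r ε γ : ℝ}
    (hCS : C ⊆ S) (hr : ∀ x ∈ C, dist x c ≤ r) (hr₀ : 0 ≤ r)
    (hmargin : ∀ y ∈ S, y ∉ C → γ * r < dist y c) (hγε : 1 + 2 * ε ≤ γ)
    (hμ : dist μ c ≤ ε * r) :
    S.filter (fun x => dist x μ ≤ (1 + ε) * r) = C := by
  ext x
  rw [Finset.mem_filter]
  constructor
  · rintro ⟨hxS, hxμ⟩
    by_contra hxC
    have hfar := hmargin x hxS hxC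
    have hnear : dist x c ≤ (1 + 2 * ε) * r := by linarith [dist_triangle x μ c]
    linarith [mul_le_mul_of_nonneg_right hγε hr₀]
  · intro hxC
    refine ⟨hCS hxC, ?_⟩
    linarith [hr x hxC, dist_triangle x c μ, dist_comm c μ]

theorem dist_ctr_le_rad {m : ℕ} {C : Finset (EuclideanSpace ℝ (Fin m))}
    {x : EuclideanSpace ℝ (Fin m)} (hx : x ∈ C) : dist x (ctr C) ≤ rad C :=
  le_csSup (C.finite_toSet.image _).bddAbove ⟨x, hx, rfl⟩

theorem exists_dist_ctr_eq_rad {m : ℕ} {C : Finset (EuclideanSpace ℝ (Fin m))}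
    (hC : C.Nonempty) : ∃ x ∈ C, dist x (ctr C) = rad C :=
  (hC.to_set.image _).csSup_mem (C.finite_toSet.image _)

theorem stmt5_general {m k : ℕ} (X : Finset (EuclideanSpace ℝ (Fin m)))
    (Cl : Fin k → Finset (EuclideanSpace ℝ (Fin m)))
    (hne : ∀ i, (Cl i).Nonempty)
    (γ : ℝ)
    (hmargin : ∀ i, ∀ x ∈ Cl i, ∀ y ∈ X, y ∉ Cl i →
      γ * dist x (ctr (Cl i)) < dist y (ctr (Cl i)))
    (ε : ℝ) (hγε : 1 + 2 * ε ≤ γ)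
    (i : Fin k) (μ' : EuclideanSpace ℝ (Fin m))
    (hμ' : dist μ' (ctr (Cl i)) ≤ ε * rad (Cl i))
    (S : Finset (EuclideanSpace ℝ (Fin m))) (hCS : Cl i ⊆ S) (hSX : S ⊆ X) :
    S.filter (fun x => dist x μ' ≤ (1 + ε) * rad (Cl i)) = Cl i := by
  obtain ⟨x₀, hx₀, hx₀rad⟩ := exists_dist_ctr_eq_rad (hne i)
  refine filter_dist_le_eq_of_margin hCS (fun x hx => dist_ctr_le_rad hx)
    (hx₀rad ▸ dist_nonneg) (fun y hyS hyC => ?_) hγε hμ'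
  rw [← hx₀rad]
  exact hmargin i x₀ hx₀ y (hSX hyS) hyC

/-- Under the γ-margin property with γ ≥ 1 + 2ε, if μ' satisfies
d(μ', μ_i) ≤ ε·r(C_i) and C_i ⊆ S ⊆ X, then
{x ∈ S : d(x, μ') ≤ (1+ε)·r(C_i)} = C_i. -/
theorem stmt5 {m k : ℕ} (X : Finset (EuclideanSpace ℝ (Fin m)))
    (Cl : Fin k → Finset (EuclideanSpace ℝ (Fin m)))
    (hsub : ∀ i, Cl i ⊆ X) (hne : ∀ i, (Cl i).Nonempty)
    (hpart : ∀ x ∈ X, ∃! i, x ∈ Cl i)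
    (γ : ℝ) (hγ : 1 ≤ γ)
    (hmargin : ∀ i, ∀ x ∈ Cl i, ∀ y ∈ X, y ∉ Cl i →
      γ * dist x (ctr (Cl i)) < dist y (ctr (Cl i)))
    (ε : ℝ) (hε : 0 ≤ ε) (hγε : 1 + 2 * ε ≤ γ)
    (i : Fin k) (μ' : EuclideanSpace ℝ (Fin m))
    (hμ' : dist μ' (ctr (Cl i)) ≤ ε * rad (Cl i))
    (S : Finset (EuclideanSpace ℝ (Fin m))) (hCS : Cl i ⊆ S) (hSX : S ⊆ X) :
    S.filter (fun x => dist x μ' ≤ (1 + ε) * rad (Cl i)) = Cl i :=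
  stmt5_general X Cl hne γ hmargin ε hγε i μ' hμ' S hCS hSX
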